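/- Let A ∈ ℤ^{m×n} and W ∈ ℤ^{k×n}, and suppose the (m+k)×(n+m) block matrix M = [[A, I_m],[W, 0_{k×m}]] has rank m+k. Then M is unimodular (i.e., every nonsingular (m+k)×(m+k) submatrix of M has determinant ±1) if and only if for every b ∈ ℤ^m and every d ∈ ℤ^k, the polyhedron {x ∈ ℝ^n : Ax ≤ b, Wx = d, x ≥ 0} is integral. -/

import Mathlib

/-!
Adding slack variables `x ↦ (x, b - A x)` is an injective affine map carrying the polyhedron
`{A x ≤ b, W x = d, x ≥ 0}` onto the standard-form polyhedron `{z ≥ 0 | M z = (b, d)}` of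
`M = [[A, I], [W, 0]]` and its integer points onto the integer points of the latter, so it suffices
to characterise unimodularity of a full-row-rank `M` by integrality of all `{z ≥ 0 | M z = β}`.

If `M` is unimodular, a point whose support indexes independent columns is a basic solution
`B⁻¹ β` for a nonsingular maximal submatrix `B`, hence integral. Any other point `z` has an integer
kernel vector `c` supported in its support; moving from `z` along `±c` until a coordinate vanishes
gives points of smaller support, and `z` is a convex combination of them, or, when `c` has one
sign, one of them plus a recession direction of the integer hull.

Conversely, basic solutions are vertices, and a vertex of a polyhedron that is the convex hull of
its integer points is integral. Shifting `B⁻¹ u` by an integer vector makes it a nonnegative basic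
solution, so `B⁻¹` is integral and `det B = ±1`.
-/

open Matrix Set

/-- A point of `ℝⁿ` is integral if all its coordinates are integers. -/
def IsIntegerPoint {n : ℕ} (x : Fin n → ℝ) : Prop := ∀ i, ∃ z : ℤ, x i = (z : ℝ)

/-- An integral matrix of full row rank is unimodular if each of its nonsingular maximal
square submatrices has determinant `±1`. -/
def IsUnimodularRect {r s : Type*} [Fintype r] [DecidableEq r]
    (M : Matrix r s ℤ) : Prop :=
  ∀ g : r → s, Function.Injective g →
    (M.submatrix id g).det ≠ 0 → (M.submatrix id g).det = 1 ∨ (M.submatrix id g).det = -1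

open Function
open scoped Pointwise

def integerPoints (ι : Type*) : Set (ι → ℝ) :=
  range fun v : ι → ℤ => ((↑) ∘ v : ι → ℝ)

def stdPolyhedron {R C : Type*} [Fintype C] (M : Matrix R C ℤ) (β : R → ℤ) : Set (C → ℝ) :=
  {z | 0 ≤ z ∧ M.map (Int.cast : ℤ → ℝ) *ᵥ z = (↑) ∘ β}

lemma add_smul_mem_convexHull {E : Type*} [AddCommGroup E] [Module ℝ E] {s : Set E} {v : E}
    (hv : ∀ x ∈ s, x + v ∈ s) {y : E} (hy : y ∈ convexHull ℝ s) {t : ℝ} (ht : 0 ≤ t) :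
    y + t • v ∈ convexHull ℝ s := by
  have hnat : ∀ x ∈ s, ∀ n : ℕ, x + (n : ℝ) • v ∈ s := by
    intro x hx n
    induction n with
    | zero => simpa using hx
    | succ n ih => simpa [add_smul, add_assoc] using hv _ ih
  have htrans : t • v +ᵥ s ⊆ convexHull ℝ s := by
    rintro _ ⟨x, hx, rfl⟩
    -- `x + t • v` lies between `x + ⌊t⌋₊ • v` and `x + (⌊t⌋₊ + 1) • v`
    set f := t - ⌊t⌋₊
    have hf0 : 0 ≤ f := sub_nonneg.mpr (Nat.floor_le ht)
    have hf1 : f ≤ 1 := by linarith [Nat.lt_floor_add_one t]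
    have := convex_convexHull ℝ s (subset_convexHull ℝ s (hnat x hx ⌊t⌋₊))
      (subset_convexHull ℝ s (hnat x hx (⌊t⌋₊ + 1))) (sub_nonneg.mpr hf1) hf0 (by ring)
    convert this using 1
    simp only [vadd_eq_add, Nat.cast_add, Nat.cast_one, f]
    module
  rw [add_comm, ← vadd_eq_add]
  exact convexHull_min htrans (convex_convexHull ℝ s)
    (by rw [convexHull_vadd]; exact vadd_mem_vadd_set hy)

lemma exists_support_add_smul_ssubset {ι : Type*} [Finite ι] {z y : ι → ℝ} (hz : 0 ≤ z)
    (hy : support y ⊆ support z) (hneg : ∃ i, y i < 0) :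
    ∃ t : ℝ, 0 < t ∧ 0 ≤ z + t • y ∧ support (z + t • y) ⊂ support z := by
  have := Fintype.ofFinite ι
  classical
  -- the ratio test of the simplex method
  obtain ⟨i₀, hi₀, hmin⟩ := (Finset.univ.filter (y · < 0)).exists_min_image
    (fun i => z i / -y i) (by simpa [Finset.Nonempty] using hneg)
  simp only [Finset.mem_filter, Finset.mem_univ, true_and] at hi₀ hmin
  have hpos : ∀ i, y i < 0 → 0 < z i := fun i hi => (hz i).lt_of_ne' (hy hi.ne)
  set t := z i₀ / -y i₀
  have ht : 0 < t := div_pos (hpos i₀ hi₀) (neg_pos.mpr hi₀)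
  have hzero : (z + t • y) i₀ = 0 := by
    simp only [Pi.add_apply, Pi.smul_apply, smul_eq_mul, t]
    field_simp [hi₀.ne]
    ring
  refine ⟨t, ht, fun i => ?_, ?_⟩
  · simp only [Pi.zero_apply, Pi.add_apply, Pi.smul_apply, smul_eq_mul]
    rcases lt_or_ge (y i) 0 with hi | hi
    · linarith [(le_div_iff₀ (neg_pos.mpr hi)).mp (hmin i hi)]
    · exact add_nonneg (hz i) (mul_nonneg ht.le hi)
  · refine (ssubset_iff_of_subset fun i hi => ?_).mpr ⟨i₀, (hpos i₀ hi₀).ne', not_not.mpr hzero⟩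
    by_contra hzi
    have hyi : y i = 0 := notMem_support.mp fun h => hzi (hy h)
    simp [notMem_support.mp hzi, hyi] at hi

lemma support_subset_of_mem_openSegment {ι : Type*} {x x' z : ι → ℝ} (hx : 0 ≤ x) (hx' : 0 ≤ x')
    (h : z ∈ openSegment ℝ x x') : support x ⊆ support z := by
  obtain ⟨a, b, ha, hb, -, rfl⟩ := h
  intro i hi hzi
  have : a * x i + b * x' i = 0 := by simpa using hzi
  exact hi ((mul_eq_zero.mp (by linarith [mul_nonneg ha.le (hx i), mul_nonneg hb.le (hx' i)]
    : a * x i = 0)).resolve_left ha.ne')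

section LinearAlgebra

variable {R C : Type*} [Fintype C]

lemma map_intCast_mulVec {K : Type*} [Ring K] (M : Matrix R C ℤ) (v : C → ℤ) :
    M.map (Int.cast : ℤ → K) *ᵥ ((↑) ∘ v) = (↑) ∘ (M *ᵥ v) :=
  funext fun r => (RingHom.map_mulVec (Int.castRingHom K) M v r).symm

lemma mulVec_eq_submatrix_mulVec [Fintype R] {K : Type*} [CommSemiring K] (N : Matrix R C K)
    {g : R → C} (hg : Injective g) {z : C → K} (hz : support z ⊆ range g) :
    N *ᵥ z = N.submatrix id g *ᵥ (z ∘ g) := by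
  funext r
  refine (Fintype.sum_of_injective g hg _ _ (fun c hc => ?_) fun p => rfl).symm
  rw [notMem_support.mp fun h => hc (hz h), mul_zero]

lemma eq_of_mulVec_eq_of_support_subset [Fintype R] [DecidableEq R] {K : Type*} [Field K]
    (N : Matrix R C K) {g : R → C} (hg : Injective g) (hdet : (N.submatrix id g).det ≠ 0)
    {x y : C → K} (hx : support x ⊆ range g) (hy : support y ⊆ range g)
    (h : N *ᵥ x = N *ᵥ y) : x = y := by
  rw [mulVec_eq_submatrix_mulVec N hg hx, mulVec_eq_submatrix_mulVec N hg hy] at h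
  have hxy : x ∘ g = y ∘ g := sub_eq_zero.mp <| eq_zero_of_mulVec_eq_zero hdet <| by
    rw [mulVec_sub, h, sub_self]
  funext c
  by_cases hc : c ∈ range g
  · obtain ⟨r, rfl⟩ := hc
    exact congrFun hxy r
  · rw [notMem_support.mp fun h => hc (hx h), notMem_support.mp fun h => hc (hy h)]

lemma mem_integerPoints_of_isUnit_det [Fintype R] [DecidableEq R] {B : Matrix R R ℤ}
    (hB : IsUnit B.det) {y : R → ℝ} {β : R → ℤ} (hy : B.map (Int.cast : ℤ → ℝ) *ᵥ y = (↑) ∘ β) :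
    y ∈ integerPoints R := by
  refine ⟨B⁻¹ *ᵥ β, ?_⟩
  show (↑) ∘ (B⁻¹ *ᵥ β) = y
  have hinv : B⁻¹.map (Int.cast : ℤ → ℝ) * B.map Int.cast = 1 := by
    refine (Matrix.map_mul (f := Int.castRingHom ℝ)).symm.trans ?_
    rw [nonsing_inv_mul B hB, Matrix.map_one _ (map_zero _) (map_one _)]
  rw [← map_intCast_mulVec, ← hy, mulVec_mulVec, hinv, one_mulVec]

lemma isUnit_det_of_inv_mulVec_mem_integerPoints [Fintype R] [DecidableEq R] {B : Matrix R R ℤ}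
    (hB : B.det ≠ 0)
    (h : ∀ u : R → ℤ, (B.map (Int.cast : ℤ → ℝ))⁻¹ *ᵥ ((↑) ∘ u) ∈ integerPoints R) :
    IsUnit B.det := by
  have hunit : IsUnit (B.map (Int.cast : ℤ → ℝ)).det := by
    rw [← Int.cast_det]
    exact isUnit_iff_ne_zero.mpr (Int.cast_ne_zero.mpr hB)
  choose N hN using fun j => h (Pi.single j 1)
  have hNB : (of fun i j => N j i).map (Int.cast : ℤ → ℝ) = (B.map (Int.cast : ℤ → ℝ))⁻¹ := by
    ext i j
    have hsingle : ((↑) ∘ Pi.single j (1 : ℤ) : R → ℝ) = Pi.single j 1 := by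
      ext k
      by_cases hk : k = j <;> simp [hk]
    simpa [hsingle, mulVec_single_one] using congrFun (hN j) i
  have hBN : B * of (fun i j => N j i) = 1 := Matrix.map_injective Int.cast_injective <| by
    change (B * _).map (Int.castRingHom ℝ) = (1 : Matrix R R ℤ).map (Int.castRingHom ℝ)
    rw [Matrix.map_mul]
    change B.map Int.cast * (of _).map Int.cast = (1 : Matrix R R ℤ).map Int.cast
    rw [hNB, mul_nonsing_inv _ hunit, Matrix.map_one _ Int.cast_zero Int.cast_one]
  exact isUnit_det_of_right_inverse hBN

lemma exists_submatrix_det_ne_zero_of_linearIndepOn [Fintype R] [DecidableEq R]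
    (M : Matrix R C ℤ) (hM : (M.map (Int.cast : ℤ → ℚ)).rank = Fintype.card R) {s : Set C}
    (hs : LinearIndepOn ℚ (M.map (Int.cast : ℤ → ℚ)).col s) :
    ∃ g : R → C, Injective g ∧ s ⊆ range g ∧ (M.submatrix id g).det ≠ 0 := by
  classical
  set N := M.map (Int.cast : ℤ → ℚ)
  have hspan : Submodule.span ℚ (range N.col) = ⊤ := Submodule.eq_top_of_finrank_eq <| by
    rw [← rank_eq_finrank_span_cols, hM, Module.finrank_fintype_fun_eq_card]
  set t := hs.extend (subset_univ s)
  have ht : LinearIndependent ℚ (fun j : t => N.col j) := hs.linearIndepOn_extend _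
  have hcard : Fintype.card R = Fintype.card t := by
    rw [linearIndependent_iff_card_eq_finrank_span.mp ht, Set.finrank, ← image_eq_range,
      hs.span_image_extend_eq_span_image, image_univ, hspan, finrank_top,
      Module.finrank_fintype_fun_eq_card]
  let e : R ≃ t := Fintype.equivOfCardEq hcard
  refine ⟨Subtype.val ∘ e, Subtype.val_injective.comp e.injective, fun j hj => ?_, ?_⟩
  · exact ⟨e.symm ⟨j, hs.subset_extend _ hj⟩, by simp⟩
  · have hunit : IsUnit (N.submatrix id (Subtype.val ∘ e)) :=
      linearIndependent_cols_iff_isUnit.mp (ht.comp e e.injective)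
    intro h
    apply ((isUnit_iff_isUnit_det _).mp hunit).ne_zero
    change ((M.submatrix id _).map Int.cast).det = 0
    rw [← Int.cast_det, h, Int.cast_zero]

lemma exists_mulVec_eq_zero_of_not_linearIndepOn (M : Matrix R C ℤ) {s : Set C}
    (hs : ¬ LinearIndepOn ℚ (M.map (Int.cast : ℤ → ℚ)).col s) :
    ∃ c : C → ℤ, c ≠ 0 ∧ support c ⊆ s ∧ M *ᵥ c = 0 := by
  rw [LinearIndepOn, ← LinearIndependent.iff_fractionRing ℤ ℚ, ← LinearIndepOn] at hs
  obtain ⟨l, hls, hl, hl0⟩ := linearDepOn_iff'.mp hs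
  refine ⟨l, DFunLike.coe_injective.ne hl0, ?_, funext fun r => Int.cast_injective (α := ℚ) ?_⟩
  · simpa [Finsupp.mem_supported] using hls
  · have := congrFun hl r
    simp only [Finsupp.linearCombination_apply] at this
    rw [Finsupp.sum_fintype _ _ (by simp)] at this
    simpa [mulVec, dotProduct, Finset.sum_apply, mul_comm] using this

end LinearAlgebra

section StandardForm

variable {R C : Type*} [Fintype C]

lemma convex_stdPolyhedron (M : Matrix R C ℤ) (β : R → ℤ) : Convex ℝ (stdPolyhedron M β) :=
  (convex_Ici 0).inter ((convex_singleton _).linear_preimage (M.map (Int.cast : ℤ → ℝ)).mulVecLin)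

variable {M : Matrix R C ℤ} {β : R → ℤ}

lemma add_mem_stdPolyhedron {z y : C → ℝ} (hz : z ∈ stdPolyhedron M β)
    (hy : M.map (Int.cast : ℤ → ℝ) *ᵥ y = 0) (hzy : 0 ≤ z + y) : z + y ∈ stdPolyhedron M β :=
  ⟨hzy, by rw [mulVec_add, hz.2, hy, add_zero]⟩

lemma add_mem_stdPolyhedron_inter_integerPoints {x : C → ℝ}
    (hx : x ∈ stdPolyhedron M β ∩ integerPoints C) {c : C → ℤ} (hc : 0 ≤ c) (hMc : M *ᵥ c = 0) :
    x + (↑) ∘ c ∈ stdPolyhedron M β ∩ integerPoints C := by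
  obtain ⟨hxP, v, rfl⟩ := hx
  refine ⟨add_mem_stdPolyhedron hxP ?_ (add_nonneg hxP.1 fun i => Int.cast_nonneg (hc i)),
    v + c, ?_⟩
  · rw [map_intCast_mulVec, hMc]
    ext; simp
  · ext; simp

lemma mem_integerPoints_of_support_subset_range [Fintype R] [DecidableEq R]
    (hU : IsUnimodularRect M) {g : R → C} (hg : Injective g) (hdet : (M.submatrix id g).det ≠ 0)
    {z : C → ℝ} (hz : z ∈ stdPolyhedron M β) (hzg : support z ⊆ range g) :
    z ∈ integerPoints C := by
  have hB : (M.submatrix id g).map (Int.cast : ℤ → ℝ) *ᵥ (z ∘ g) = (↑) ∘ β := by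
    rw [← hz.2, mulVec_eq_submatrix_mulVec _ hg hzg]
    rfl
  obtain ⟨v, hv⟩ := mem_integerPoints_of_isUnit_det (Int.isUnit_iff.mpr (hU g hg hdet)) hB
  refine ⟨extend g v 0, funext fun c => ?_⟩
  by_cases hc : c ∈ range g
  · obtain ⟨r, rfl⟩ := hc
    simpa [hg.extend_apply] using congrFun hv r
  · simp [extend_apply' _ _ _ fun ⟨r, hr⟩ => hc ⟨r, hr⟩, notMem_support.mp fun h => hc (hzg h)]

lemma mem_convexHull_of_mulVec_eq_zero {z : C → ℝ} (hz : z ∈ stdPolyhedron M β)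
    (ih : ∀ z' ∈ stdPolyhedron M β, support z' ⊂ support z →
      z' ∈ convexHull ℝ (stdPolyhedron M β ∩ integerPoints C))
    {c : C → ℤ} (hc0 : c ≠ 0) (hcz : support c ⊆ support z) (hMc : M *ᵥ c = 0) :
    z ∈ convexHull ℝ (stdPolyhedron M β ∩ integerPoints C) := by
  wlog hneg : ∃ i, c i < 0 generalizing c
  · refine this (neg_ne_zero.mpr hc0) (by rwa [support_neg]) (by rw [mulVec_neg, hMc, neg_zero]) ?_
    simp only [not_exists, not_lt] at hneg
    obtain ⟨i, hi⟩ := Function.ne_iff.mp hc0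
    exact ⟨i, neg_neg_of_pos ((hneg i).lt_of_ne' hi)⟩
  set y : C → ℝ := (↑) ∘ c
  have hy : M.map (Int.cast : ℤ → ℝ) *ᵥ y = 0 := by
    rw [map_intCast_mulVec, hMc]
    ext; simp
  have hyz : support y ⊆ support z := fun i hi => hcz fun h => hi (by simp [y, h])
  obtain ⟨t₁, ht₁, hnn₁, hss₁⟩ := exists_support_add_smul_ssubset hz.1 hyz
    (by simpa [y] using hneg)
  have hz₁ := ih _ (add_mem_stdPolyhedron hz (by rw [mulVec_smul, hy, smul_zero]) hnn₁) hss₁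
  by_cases hpos : ∃ i, 0 < c i
  · obtain ⟨t₂, ht₂, hnn₂, hss₂⟩ := exists_support_add_smul_ssubset hz.1 (y := -y)
      (by rwa [support_neg]) (by simpa [y] using hpos)
    have hz₂ := ih _ (add_mem_stdPolyhedron hz
      (by rw [mulVec_smul, mulVec_neg, hy, neg_zero, smul_zero]) hnn₂) hss₂
    have := convex_convexHull ℝ _ hz₁ hz₂ (a := t₂ / (t₁ + t₂)) (b := t₁ / (t₁ + t₂))
      (by positivity) (by positivity) (by field_simp; ring)
    convert this using 1
    match_scalars <;> field_simp <;> ring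
  · -- `c ≤ 0`, so `-y` is a recession direction of the integer points
    simp only [not_exists, not_lt] at hpos
    have := add_smul_mem_convexHull
      (fun x hx => add_mem_stdPolyhedron_inter_integerPoints hx (c := -c)
        (fun i => neg_nonneg.mpr (hpos i)) (by rw [mulVec_neg, hMc, neg_zero])) hz₁ ht₁.le
    convert this using 1
    funext i
    simp [y]

theorem stdPolyhedron_subset_convexHull [Fintype R] [DecidableEq R]
    (hM : (M.map (Int.cast : ℤ → ℚ)).rank = Fintype.card R) (hU : IsUnimodularRect M) :
    stdPolyhedron M β ⊆ convexHull ℝ (stdPolyhedron M β ∩ integerPoints C) := by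
  suffices ∀ s : Set C, ∀ z ∈ stdPolyhedron M β, support z = s →
      z ∈ convexHull ℝ (stdPolyhedron M β ∩ integerPoints C) from fun z hz => this _ z hz rfl
  intro s
  induction s using WellFoundedLT.induction with | _ s ih => ?_
  rintro z hz rfl
  by_cases hind : LinearIndepOn ℚ (M.map (Int.cast : ℤ → ℚ)).col (support z)
  · obtain ⟨g, hg, hzg, hdet⟩ := exists_submatrix_det_ne_zero_of_linearIndepOn M hM hind
    exact subset_convexHull ℝ _ ⟨hz, mem_integerPoints_of_support_subset_range hU hg hdet hz hzg⟩
  · obtain ⟨c, hc0, hcz, hMc⟩ := exists_mulVec_eq_zero_of_not_linearIndepOn M hind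
    exact mem_convexHull_of_mulVec_eq_zero hz (fun z' hz' hss => ih _ hss z' hz' rfl) hc0 hcz hMc

lemma mem_extremePoints_stdPolyhedron [Fintype R] [DecidableEq R] {g : R → C}
    (hg : Injective g) (hdet : (M.submatrix id g).det ≠ 0) {z : C → ℝ}
    (hz : z ∈ stdPolyhedron M β) (hzg : support z ⊆ range g) :
    z ∈ (stdPolyhedron M β).extremePoints ℝ := by
  have hdetℝ : ((M.map (Int.cast : ℤ → ℝ)).submatrix id g).det ≠ 0 := by
    rw [submatrix_map, ← Int.cast_det]
    exact Int.cast_ne_zero.mpr hdet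
  have key : ∀ x ∈ stdPolyhedron M β, ∀ x', 0 ≤ x' → z ∈ openSegment ℝ x x' → x = z :=
    fun x hx x' hx' hzx => eq_of_mulVec_eq_of_support_subset _ hg hdetℝ
      ((support_subset_of_mem_openSegment hx.1 hx' hzx).trans hzg) hzg (hx.2.trans hz.2.symm)
  refine mem_extremePoints.mpr ⟨hz, fun x₁ hx₁ x₂ hx₂ hzx => ⟨key x₁ hx₁ x₂ hx₂.1 hzx, ?_⟩⟩
  exact key x₂ hx₂ x₁ hx₁.1 (openSegment_symm ℝ x₁ x₂ ▸ hzx)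

lemma mem_integerPoints_of_submatrix_mulVec_eq [Fintype R] [DecidableEq R]
    (h : stdPolyhedron M β ⊆ convexHull ℝ (stdPolyhedron M β ∩ integerPoints C))
    {g : R → C} (hg : Injective g) (hdet : (M.submatrix id g).det ≠ 0) {y : R → ℝ} (hy : 0 ≤ y)
    (hβ : (M.submatrix id g).map (Int.cast : ℤ → ℝ) *ᵥ y = (↑) ∘ β) : y ∈ integerPoints R := by
  set z : C → ℝ := extend g y 0
  have hzy : z ∘ g = y := funext (hg.extend_apply y 0)
  have hzg : support z ⊆ range g := fun c hc => by_contra fun h => hc (extend_apply' _ _ _ h)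
  have hz : z ∈ stdPolyhedron M β := by
    refine ⟨extend_nonneg hy le_rfl, ?_⟩
    rw [mulVec_eq_submatrix_mulVec _ hg hzg, hzy]
    exact hβ
  obtain ⟨-, v, hv⟩ := extremePoints_convexHull_subset
    (inter_extremePoints_subset_extremePoints_of_subset
      (convexHull_min inter_subset_left (convex_stdPolyhedron M β))
      ⟨h hz, mem_extremePoints_stdPolyhedron hg hdet hz hzg⟩)
  exact ⟨v ∘ g, by rw [← hzy, ← hv]; rfl⟩

theorem isUnimodularRect_of_subset_convexHull [Fintype R] [DecidableEq R]
    (h : ∀ β, stdPolyhedron M β ⊆ convexHull ℝ (stdPolyhedron M β ∩ integerPoints C)) :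
    IsUnimodularRect M := by
  intro g hg hdet
  set B := M.submatrix id g
  refine Int.isUnit_iff.mp (isUnit_det_of_inv_mulVec_mem_integerPoints hdet fun u => ?_)
  set w := (B.map (Int.cast : ℤ → ℝ))⁻¹ *ᵥ ((↑) ∘ u)
  set t : R → ℤ := fun r => ⌈-w r⌉
  have hunit : IsUnit (B.map (Int.cast : ℤ → ℝ)).det := by
    rw [← Int.cast_det]
    exact isUnit_iff_ne_zero.mpr (Int.cast_ne_zero.mpr hdet)
  have hwt : B.map (Int.cast : ℤ → ℝ) *ᵥ (w + (↑) ∘ t) = (↑) ∘ (u + B *ᵥ t) := by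
    rw [mulVec_add, mulVec_mulVec, mul_nonsing_inv _ hunit, one_mulVec, map_intCast_mulVec]
    ext; simp
  obtain ⟨v, hv⟩ := mem_integerPoints_of_submatrix_mulVec_eq (h _) hg hdet
    (fun r => by simpa [t] using neg_le_iff_add_nonneg'.mp (Int.le_ceil (-w r))) hwt
  refine ⟨v - t, funext fun r => ?_⟩
  have := congrFun hv r
  simp only [Function.comp_apply, Pi.add_apply, Pi.sub_apply, Int.cast_sub] at this ⊢
  linarith

theorem isUnimodularRect_iff_stdPolyhedron_eq_convexHull [Fintype R] [DecidableEq R]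
    (hM : (M.map (Int.cast : ℤ → ℚ)).rank = Fintype.card R) :
    IsUnimodularRect M ↔
      ∀ β, stdPolyhedron M β = convexHull ℝ (stdPolyhedron M β ∩ integerPoints C) :=
  ⟨fun hU β => (stdPolyhedron_subset_convexHull hM hU).antisymm
      (convexHull_min inter_subset_left (convex_stdPolyhedron M β)),
    fun h => isUnimodularRect_of_subset_convexHull fun β => (h β).subset⟩

end StandardForm

section SlackVariables

variable {m n k : ℕ} (A : Matrix (Fin m) (Fin n) ℤ) (W : Matrix (Fin k) (Fin n) ℤ)

def blockPolyhedron (b : Fin m → ℤ) (d : Fin k → ℤ) : Set (Fin n → ℝ) :=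
  {x | (∀ i, (A.map (Int.cast : ℤ → ℝ)).mulVec x i ≤ (b i : ℝ)) ∧
    (∀ j, (W.map (Int.cast : ℤ → ℝ)).mulVec x j = (d j : ℝ)) ∧ (∀ i, 0 ≤ x i)}

/-- `x ↦ (x, b - A x)`, written as `[I; -A] x + (0, b)`. -/
def slackLift (b : Fin m → ℤ) : (Fin n → ℝ) →ᵃ[ℝ] (Fin n ⊕ Fin m → ℝ) :=
  (fromRows 1 (-A.map (Int.cast : ℤ → ℝ))).mulVecLin.toAffineMap +
    AffineMap.const ℝ _ (Sum.elim (0 : Fin n → ℝ) ((↑) ∘ b))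

lemma slackLift_apply (b : Fin m → ℤ) (x : Fin n → ℝ) :
    slackLift A b x = Sum.elim x ((↑) ∘ b - A.map (Int.cast : ℤ → ℝ) *ᵥ x) := by
  ext (i | i) <;> simp [slackLift, fromRows_mulVec, neg_mulVec, sub_eq_neg_add]

lemma slackLift_injective (b : Fin m → ℤ) : Injective (slackLift A b) := fun x y h => by
  simpa [slackLift_apply] using congrArg (· ∘ Sum.inl) h

lemma fromBlocks_map_mulVec (z : Fin n ⊕ Fin m → ℝ) :
    (fromBlocks A 1 W 0).map (Int.cast : ℤ → ℝ) *ᵥ z =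
      Sum.elim (A.map (Int.cast : ℤ → ℝ) *ᵥ (z ∘ Sum.inl) + z ∘ Sum.inr)
        (W.map (Int.cast : ℤ → ℝ) *ᵥ (z ∘ Sum.inl)) := by
  conv_lhs => rw [← Sum.elim_comp_inl_inr z]
  rw [fromBlocks_map, Matrix.map_one _ Int.cast_zero Int.cast_one,
    Matrix.map_zero _ Int.cast_zero, fromBlocks_mulVec]
  simp

lemma mem_stdPolyhedron_fromBlocks {b : Fin m → ℤ} {d : Fin k → ℤ} {z : Fin n ⊕ Fin m → ℝ} :
    z ∈ stdPolyhedron (fromBlocks A 1 W 0) (Sum.elim b d) ↔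
      0 ≤ z ∧ A.map (Int.cast : ℤ → ℝ) *ᵥ (z ∘ Sum.inl) + z ∘ Sum.inr = (↑) ∘ b ∧
        W.map (Int.cast : ℤ → ℝ) *ᵥ (z ∘ Sum.inl) = (↑) ∘ d := by
  simp only [stdPolyhedron, mem_ofPred_eq, fromBlocks_map_mulVec, Sum.comp_elim, Sum.elim_eq_iff]

lemma image_slackLift_blockPolyhedron (b : Fin m → ℤ) (d : Fin k → ℤ) :
    slackLift A b '' blockPolyhedron A W b d =
      stdPolyhedron (fromBlocks A 1 W 0) (Sum.elim b d) := by
  ext z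
  rw [mem_stdPolyhedron_fromBlocks]
  constructor
  · rintro ⟨x, ⟨hA, hW, h0⟩, rfl⟩
    refine ⟨?_, ?_, ?_⟩
    · rintro (i | i)
      · simpa [slackLift_apply] using h0 i
      · simpa [slackLift_apply] using hA i
    · ext i
      simp [slackLift_apply]
    · ext j
      simpa [slackLift_apply] using hW j
  · rintro ⟨h0, hA, hW⟩
    refine ⟨z ∘ Sum.inl, ⟨fun i => ?_, fun j => ?_, fun i => h0 (Sum.inl i)⟩, ?_⟩
    · rw [← show _ + z (Sum.inr i) = (b i : ℝ) from congrFun hA i]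
      exact le_add_of_nonneg_right (h0 (Sum.inr i))
    · simp [hW]
    · rw [slackLift_apply, ← hA, add_sub_cancel_left, Sum.elim_comp_inl_inr]

lemma slackLift_mem_integerPoints_iff (b : Fin m → ℤ) (x : Fin n → ℝ) :
    slackLift A b x ∈ integerPoints (Fin n ⊕ Fin m) ↔ IsIntegerPoint x := by
  constructor
  · rintro ⟨v, hv⟩ i
    exact ⟨v (Sum.inl i), by simpa [slackLift_apply] using (congrFun hv (Sum.inl i)).symm⟩
  · intro hx
    choose v hv using hx
    obtain rfl : x = (↑) ∘ v := funext hv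
    refine ⟨Sum.elim v (b - A *ᵥ v), ?_⟩
    rw [slackLift_apply, map_intCast_mulVec]
    ext (i | i) <;> simp

lemma image_slackLift_integerPoints (b : Fin m → ℤ) (d : Fin k → ℤ) :
    slackLift A b '' {x | x ∈ blockPolyhedron A W b d ∧ IsIntegerPoint x} =
      stdPolyhedron (fromBlocks A 1 W 0) (Sum.elim b d) ∩ integerPoints (Fin n ⊕ Fin m) := by
  rw [← image_slackLift_blockPolyhedron, ← image_inter_preimage]
  congr 1
  ext x
  simp [slackLift_mem_integerPoints_iff]

lemma stdPolyhedron_fromBlocks_eq_convexHull_iff (b : Fin m → ℤ) (d : Fin k → ℤ) :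
    stdPolyhedron (fromBlocks A 1 W 0) (Sum.elim b d) =
        convexHull ℝ (stdPolyhedron (fromBlocks A 1 W 0) (Sum.elim b d) ∩
          integerPoints (Fin n ⊕ Fin m)) ↔
      blockPolyhedron A W b d =
        convexHull ℝ {x | x ∈ blockPolyhedron A W b d ∧ IsIntegerPoint x} := by
  rw [← image_slackLift_integerPoints, ← image_slackLift_blockPolyhedron,
    ← AffineMap.image_convexHull, (image_injective.mpr (slackLift_injective A b)).eq_iff]

end SlackVariables

/-- **Unimodularity of `[[A, I],[W, 0]]` characterizes integrality of the polyhedra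
`{x : A x ≤ b, W x = d, x ≥ 0}` for all integral `b, d`.** -/
theorem block_unimodular_iff_integral_polyhedra
    {m n k : ℕ} (A : Matrix (Fin m) (Fin n) ℤ) (W : Matrix (Fin k) (Fin n) ℤ)
    (hrank : ((Matrix.fromBlocks A (1 : Matrix (Fin m) (Fin m) ℤ) W
        (0 : Matrix (Fin k) (Fin m) ℤ)).map (Int.cast : ℤ → ℚ)).rank = m + k) :
    IsUnimodularRect (Matrix.fromBlocks A (1 : Matrix (Fin m) (Fin m) ℤ) W
        (0 : Matrix (Fin k) (Fin m) ℤ))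
    ↔ ∀ (b : Fin m → ℤ) (d : Fin k → ℤ),
        {x : Fin n → ℝ |
            (∀ i, (A.map (Int.cast : ℤ → ℝ)).mulVec x i ≤ (b i : ℝ)) ∧
            (∀ j, (W.map (Int.cast : ℤ → ℝ)).mulVec x j = (d j : ℝ)) ∧
            (∀ i, 0 ≤ x i)}
          = convexHull ℝ {x : Fin n → ℝ |
            ((∀ i, (A.map (Int.cast : ℤ → ℝ)).mulVec x i ≤ (b i : ℝ)) ∧
            (∀ j, (W.map (Int.cast : ℤ → ℝ)).mulVec x j = (d j : ℝ)) ∧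
            (∀ i, 0 ≤ x i)) ∧ IsIntegerPoint x} := by
  rw [isUnimodularRect_iff_stdPolyhedron_eq_convexHull (by simpa using hrank)]
  exact ⟨fun h b d => (stdPolyhedron_fromBlocks_eq_convexHull_iff A W b d).mp (h _),
    fun h β => Sum.elim_comp_inl_inr β ▸
      (stdPolyhedron_fromBlocks_eq_convexHull_iff A W _ _).mpr (h _ _)⟩
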